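/- For the Weierstrass ℘-function with period lattice L_ω = ω·ℤ[τ] satisfying ℘′(z)² = 4℘(z)³ − 1, one has ℘(ω/√−3, L_ω) = 0. -/

import Mathlib

/-! Multiplication by `τ` maps the lattice `L = ω·ℤ[τ]` onto itself, so `℘(τz) = τ⁻²℘(z) = τ℘(z)`.
For `z = ω/√−3` one has `τz = z + ω(1 + τ)` with `ω(1 + τ) ∈ L`, so by periodicity `℘(τz) = ℘(z)`;
since `τ ≠ 1`, `℘(z) = 0`. Periodicity is Mathlib's `PeriodPair.weierstrassP_add_coe`, once `wp ω`
is identified with the `℘`-function of the period pair `(ω, ωτ)`. -/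

noncomputable section

open Complex Real ComplexConjugate

/-- `τ = (−1+√−3)/2`, a primitive cube root of unity. -/
def tau : ℂ := (-1 + Real.sqrt 3 * Complex.I) / 2

/-- `√−3 = 1 + 2τ`, the square root of `−3` with positive imaginary part. -/
def sqrtm3 : ℂ := Real.sqrt 3 * Complex.I

/-- The ring of integers `O_K = ℤ[τ]` of `K = ℚ(√−3)`, as a subring of `ℂ`. -/
def Eis : Subring ℂ := Subring.closure {tau}

/-- `τ` as an element of `ℤ[τ]`. -/
def tauO : Eis := ⟨tau, Subring.subset_closure rfl⟩

/-- `√−3` as an element of `ℤ[τ]`. -/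
def sqrtm3O : Eis := 1 + 2 * tauO

/-- Membership in the lattice `L_ω = ω·ℤ[τ]`. -/
def inLattice (ω : ℝ) (z : ℂ) : Prop := ∃ a : Eis, z = (ω : ℂ) * a

/-- The Weierstrass `℘`-function of the lattice `L_ω = ω·ℤ[τ]`. -/
def wp (ω : ℝ) (z : ℂ) : ℂ :=
  1 / z ^ 2 + ∑' a : {w : ℂ // inLattice ω w ∧ w ≠ 0},
    (1 / (z - (a : ℂ)) ^ 2 - 1 / (a : ℂ) ^ 2)

/-- The Weierstrass `ζ`-function of the lattice `L_ω = ω·ℤ[τ]`. -/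
def wzeta (ω : ℝ) (z : ℂ) : ℂ :=
  1 / z + ∑' a : {w : ℂ // inLattice ω w ∧ w ≠ 0},
    (1 / (z - (a : ℂ)) + 1 / (a : ℂ) + z / (a : ℂ) ^ 2)

/-- The real cube root of 2, as a complex number. -/
def cbrt2 : ℂ := ((2 : ℝ) ^ ((1 : ℝ) / 3) : ℝ)

/-- The real cube root of 4, as a complex number. -/
def cbrt4 : ℂ := ((4 : ℝ) ^ ((1 : ℝ) / 3) : ℝ)

open PeriodPair

lemma PeriodPair.weierstrassP_mul (L : PeriodPair) {u : ℂ} (hu : u ≠ 0)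
    (hL : ∀ x, u * x ∈ L.lattice ↔ x ∈ L.lattice) (z : ℂ) :
    ℘[L] (u * z) = (u ^ 2)⁻¹ * ℘[L] z := by
  let e : L.lattice ≃ L.lattice := (Equiv.mulLeft₀ u hu).subtypeEquiv fun x => (hL x).symm
  rw [weierstrassP, weierstrassP, ← e.tsum_eq, ← tsum_mul_left]
  congr 1 with l
  have he : (e l : ℂ) = u * l := rfl
  rw [he, ← mul_sub, mul_pow, mul_pow, one_div, one_div, one_div, one_div, mul_inv, mul_inv,
    mul_sub]

lemma ofReal_sqrt_three_sq : (Real.sqrt 3 : ℂ) ^ 2 = 3 := by norm_cast; simp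

lemma tau_re : tau.re = -1 / 2 := by simp [tau]

lemma tau_im : tau.im = Real.sqrt 3 / 2 := by simp [tau]

lemma tau_ne_one : tau ≠ 1 := fun h => by
  have h' := congrArg Complex.re h
  rw [tau_re, one_re] at h'
  norm_num at h'

lemma tau_sq : tau ^ 2 = -1 - tau := by
  unfold tau
  linear_combination (I ^ 2 / 4) * ofReal_sqrt_three_sq + (3 / 4) * I_sq

lemma tau_pow_three : tau ^ 3 = 1 := by
  linear_combination (tau - 1) * tau_sq

lemma tau_ne_zero : tau ≠ 0 := fun h => by simpa [h] using tau_pow_three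

lemma inv_tau_sq : (tau ^ 2)⁻¹ = tau :=
  inv_eq_of_mul_eq_one_left (by linear_combination tau_pow_three)

lemma tau_mul_div_sqrtm3 (x : ℂ) : tau * (x / sqrtm3) = x / sqrtm3 + x * (1 + tau) := by
  have hs : sqrtm3 ≠ 0 := by simp [sqrtm3]
  field_simp
  unfold tau sqrtm3
  linear_combination (-(x * I ^ 2) / 2) * ofReal_sqrt_three_sq + (-(3 * x) / 2) * I_sq

lemma mem_Eis_iff {x : ℂ} : x ∈ Eis ↔ ∃ m n : ℤ, m + n * tau = x := by
  refine ⟨fun hx => ?_, ?_⟩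
  · induction hx using Subring.closure_induction with
    | mem y hy => exact ⟨0, 1, by simp [Set.mem_singleton_iff.mp hy]⟩
    | zero => exact ⟨0, 0, by simp⟩
    | one => exact ⟨1, 0, by simp⟩
    | add a b _ _ iha ihb =>
      obtain ⟨m, n, rfl⟩ := iha
      obtain ⟨p, q, rfl⟩ := ihb
      exact ⟨m + p, n + q, by push_cast; ring⟩
    | neg a _ iha =>
      obtain ⟨m, n, rfl⟩ := iha
      exact ⟨-m, -n, by push_cast; ring⟩
    | mul a b _ _ iha ihb =>
      obtain ⟨m, n, rfl⟩ := iha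
      obtain ⟨p, q, rfl⟩ := ihb
      exact ⟨m * p - n * q, m * q + n * p - n * q, by
        push_cast; linear_combination -(n * q : ℂ) * tau_sq⟩
  · rintro ⟨m, n, rfl⟩
    exact add_mem (intCast_mem _ m) (mul_mem (intCast_mem _ n) tauO.2)

lemma inLattice_iff {ω : ℝ} {z : ℂ} :
    inLattice ω z ↔ ∃ m n : ℤ, m * (ω : ℂ) + n * (ω * tau) = z := by
  constructor
  · rintro ⟨a, rfl⟩
    obtain ⟨m, n, hmn⟩ := mem_Eis_iff.mp a.2
    exact ⟨m, n, by rw [← hmn]; ring⟩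
  · rintro ⟨m, n, rfl⟩
    exact ⟨⟨m + n * tau, mem_Eis_iff.mpr ⟨m, n, rfl⟩⟩, by push_cast; ring⟩

lemma inLattice_tau_mul {ω : ℝ} {x : ℂ} (hx : inLattice ω x) : inLattice ω (tau * x) := by
  obtain ⟨a, rfl⟩ := hx
  exact ⟨tauO * a, by push_cast [tauO]; ring⟩

lemma inLattice_tau_mul_iff {ω : ℝ} {x : ℂ} : inLattice ω (tau * x) ↔ inLattice ω x := by
  refine ⟨fun hx => ?_, inLattice_tau_mul⟩
  have hx' := inLattice_tau_mul (inLattice_tau_mul hx)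
  rwa [← mul_assoc, ← mul_assoc, ← pow_three', tau_pow_three, one_mul] at hx'

lemma linearIndependent_omega_omega_mul_tau {ω : ℝ} (hω : ω ≠ 0) :
    LinearIndependent ℝ ![(ω : ℂ), ω * tau] := by
  refine LinearIndependent.pair_iff.mpr fun s t hst => ?_
  have ht : t = 0 := by simpa [tau_im, hω] using congrArg Complex.im hst
  subst ht
  simpa [hω] using hst

def eisensteinPeriodPair (ω : ℝ) (hω : ω ≠ 0) : PeriodPair :=
  ⟨ω, ω * tau, linearIndependent_omega_omega_mul_tau hω⟩

lemma mem_eisensteinPeriodPair_lattice {ω : ℝ} (hω : ω ≠ 0) {z : ℂ} :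
    z ∈ (eisensteinPeriodPair ω hω).lattice ↔ inLattice ω z := by
  rw [mem_lattice, inLattice_iff]
  rfl

lemma wp_eq_weierstrassP {ω : ℝ} (hω : ω ≠ 0) : wp ω = ℘[eisensteinPeriodPair ω hω] := by
  funext z
  set L := eisensteinPeriodPair ω hω
  set g : ℂ → ℂ := fun w => 1 / (z - w) ^ 2 - 1 / w ^ 2
  set T : Set ℂ := {w | inLattice ω w ∧ w ≠ 0}
  have hlattice : (L.lattice : Set ℂ) = {0} ∪ T := by
    ext w
    by_cases hw : w = 0
    · simp [hw, T, zero_mem]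
    · simp [hw, T, L, mem_eisensteinPeriodPair_lattice]
  have hP : HasSum ((L.lattice : Set ℂ).indicator g) (℘[L] z) :=
    hasSum_subtype_iff_indicator.mp (L.hasSum_weierstrassP z)
  rw [hlattice, Set.indicator_union_of_disjoint (by simp [T]) g] at hP
  -- Mathlib's sum runs over all of `L`; its `l = 0` term is `1 / z ^ 2` since `1 / 0 = 0`.
  have hzero : HasSum (({0} : Set ℂ).indicator g) (g 0) := by
    have h := hasSum_single (f := ({0} : Set ℂ).indicator g) 0
      fun w hw => Set.indicator_of_notMem (Set.notMem_singleton_iff.mpr hw) g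
    rwa [Set.indicator_of_mem (Set.mem_singleton 0)] at h
  have hT : HasSum (T.indicator g) (℘[L] z - g 0) := by
    simpa only [add_sub_cancel_left] using hP.sub hzero
  have hsum : ∑' a : T, g a = ℘[L] z - g 0 := (hasSum_subtype_iff_indicator.mpr hT).tsum_eq
  calc wp ω z = 1 / z ^ 2 + ∑' a : T, g a := rfl
    _ = ℘[L] z := by rw [hsum]; simp [g]

theorem wp_value_at_omega_div_sqrt_general
    (ω : ℝ) (hω : 0 < ω) :
    wp ω ((ω : ℂ) / sqrtm3) = 0 := by
  set L := eisensteinPeriodPair ω hω.ne'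
  set z := (ω : ℂ) / sqrtm3
  have hperiod : (ω : ℂ) * (1 + tau) ∈ L.lattice :=
    (mem_eisensteinPeriodPair_lattice hω.ne').mpr (inLattice_iff.mpr ⟨1, 1, by ring⟩)
  have htau : ∀ x, tau * x ∈ L.lattice ↔ x ∈ L.lattice := fun x => by
    simp only [L, mem_eisensteinPeriodPair_lattice, inLattice_tau_mul_iff]
  have hfix : tau * ℘[L] z = ℘[L] z :=
    calc tau * ℘[L] z = ℘[L] (tau * z) := by
          rw [L.weierstrassP_mul tau_ne_zero htau, inv_tau_sq]
      _ = ℘[L] (z + ω * (1 + tau)) := by rw [tau_mul_div_sqrtm3]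
      _ = ℘[L] z := L.weierstrassP_add_coe z ⟨_, hperiod⟩
  rw [wp_eq_weierstrassP hω.ne']
  by_contra h
  exact tau_ne_one ((mul_eq_right₀ h).mp hfix)

/-- From [Qiu], (2.14): `℘(ω/√−3) = 0`, with `√−3 = 1 + 2τ` the square root of `−3` with positive imaginary part.
Here `ω > 0` is pinned down by the differential equation `℘′² = 4℘³ − 1` for the
lattice `L_ω = ω·ℤ[τ]` (equivalently, the lattice invariants are `g₂ = 0`, `g₃ = 1`). -/
theorem wp_value_at_omega_div_sqrt
    (ω : ℝ) (hω : 0 < ω)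
    (hODE : ∀ z : ℂ, ¬ inLattice ω z → deriv (wp ω) z ^ 2 = 4 * wp ω z ^ 3 - 1) :
    wp ω ((ω : ℂ) / sqrtm3) = 0 :=
  wp_value_at_omega_div_sqrt_general ω hω
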